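/- Let V be an F-vector space with a non-archimedean norm and B a countably dimensional F-algebra with F-basis {t_n}. Define a norm on B⊗V by ‖x‖ = inf over representations x = Σ b_i⊗v_i of max|v_i|. Then for x = Σ t_n⊗v_n (finitely many v_n nonzero), ‖x‖ = max_n |v_n|. -/

import Mathlib

/-! The `n`-th coefficient of `x` in the basis `t` is recovered from any representation
`x = ∑ i, b i ⊗ w i` as `∑ i, t*ₙ(b i) • w i`, so the ultrametric inequality bounds `|vₙ|` by
`max_i |w i|`; the representation `∑ n, t n ⊗ vₙ` itself attains this bound. -/

open TensorProduct

section Nonarchimedean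

variable {V : Type*} [AddCommMonoid V] {ν : V → ℝ}

theorem IsNonarchimedean.apply_sum_le_iSup {ι : Type*} [Fintype ι] (hν0 : ν 0 = 0)
    (hνnonneg : ∀ v, 0 ≤ ν v) (hνna : IsNonarchimedean ν) (w : ι → V) :
    ν (∑ i, w i) ≤ ⨆ i, ν (w i) := by
  cases isEmpty_or_nonempty ι
  · simp [hν0]
  · obtain ⟨i, -, hi⟩ := hνna.finset_image_add hν0 hνnonneg w Finset.univ
    exact hi.trans (Finite.le_ciSup (fun i => ν (w i)) i)

theorem Finsupp.iSup_support_apply_eq_iSup {ι : Type*} (hν0 : ν 0 = 0)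
    (hνnonneg : ∀ v, 0 ≤ ν v) (f : ι →₀ V) :
    ⨆ i : f.support, ν (f i) = ⨆ i, ν (f i) := by
  have hbdd : BddAbove (Set.range fun i => ν (f i)) :=
    (f.finite_range.image ν).bddAbove.mono (Set.range_comp ν f).subset
  apply le_antisymm
  · exact Real.iSup_le (fun i => le_ciSup hbdd (i : ι)) (Real.iSup_nonneg fun i => hνnonneg _)
  · have hnonneg : 0 ≤ ⨆ i : f.support, ν (f i) := Real.iSup_nonneg fun i => hνnonneg _
    refine Real.iSup_le (fun i => ?_) hnonneg
    by_cases hi : i ∈ f.support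
    · exact Finite.le_ciSup (fun j : f.support => ν (f j)) ⟨i, hi⟩
    · rwa [Finsupp.notMem_support_iff.mp hi, hν0]

end Nonarchimedean

section RepresentationBounds

variable {R M V : Type*} [CommSemiring R] [AddCommMonoid M] [Module R M]
  [AddCommMonoid V] [Module R V]

def representationBounds (ν : V → ℝ) (x : M ⊗[R] V) : Set ℝ :=
  { r : ℝ | ∃ (n : ℕ) (b : Fin n → M) (w : Fin n → V),
    x = ∑ i, b i ⊗ₜ[R] w i ∧ r = ⨆ i, ν (w i) }

theorem iSup_mem_representationBounds {ι : Type*} [Fintype ι] (ν : V → ℝ) (b : ι → M)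
    (w : ι → V) : ⨆ i, ν (w i) ∈ representationBounds ν (∑ i, b i ⊗ₜ[R] w i) := by
  let e := Fintype.equivFin ι
  refine ⟨Fintype.card ι, b ∘ e.symm, w ∘ e.symm, ?_, ?_⟩
  · exact (e.symm.sum_comp fun i => b i ⊗ₜ[R] w i).symm
  · exact (e.symm.iSup_comp (g := fun i => ν (w i))).symm

theorem apply_le_of_mem_representationBounds {ι : Type*} [DecidableEq ι] (ℬ : Module.Basis ι R M)
    {ν : V → ℝ} (hν0 : ν 0 = 0) (hνnonneg : ∀ v, 0 ≤ ν v) (hνna : IsNonarchimedean ν)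
    (hνsmul : ∀ (c : R) (v : V), ν (c • v) ≤ ν v) {x : M ⊗[R] V} {r : ℝ}
    (hr : r ∈ representationBounds ν x) (n : ι) :
    ν (equivFinsuppOfBasisLeft ℬ x n) ≤ r := by
  obtain ⟨k, b, w, rfl, rfl⟩ := hr
  simp only [map_sum, Finsupp.finsetSum_apply, equivFinsuppOfBasisLeft_apply_tmul_apply]
  exact (hνna.apply_sum_le_iSup hν0 hνnonneg _).trans
    (ciSup_mono (Finite.bddAbove_range _) fun i => hνsmul _ _)

theorem isLeast_representationBounds {ι : Type*} (ℬ : Module.Basis ι R M)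
    {ν : V → ℝ} (hν0 : ν 0 = 0) (hνnonneg : ∀ v, 0 ≤ ν v) (hνna : IsNonarchimedean ν)
    (hνsmul : ∀ (c : R) (v : V), ν (c • v) ≤ ν v) (v : ι →₀ V) :
    IsLeast (representationBounds ν (v.sum fun n vn => ℬ n ⊗ₜ[R] vn)) (⨆ n, ν (v n)) := by
  classical
  constructor
  · rw [← Finsupp.iSup_support_apply_eq_iSup hν0 hνnonneg, Finsupp.sum,
      ← Finset.sum_coe_sort v.support]
    exact iSup_mem_representationBounds ν _ _
  · intro r hr
    have hv := (equivFinsuppOfBasisLeft ℬ).apply_symm_apply v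
    rw [equivFinsuppOfBasisLeft_symm_apply] at hv
    refine Real.iSup_le (fun n => ?_) ?_
    · rw [← hv]
      exact apply_le_of_mem_representationBounds ℬ hν0 hνnonneg hνna hνsmul hr n
    · obtain ⟨-, -, w, -, rfl⟩ := hr
      exact Real.iSup_nonneg fun i => hνnonneg _

end RepresentationBounds

theorem stmt0 (F : Type*) [Field F]
    (V : Type*) [AddCommGroup V] [Module F V]
    (B : Type*) [CommRing B] [Algebra F B]
    (ν : V → ℝ) (hν0 : ν 0 = 0) (hνnonneg : ∀ v, 0 ≤ ν v)
    (hνna : ∀ v w, ν (v + w) ≤ max (ν v) (ν w))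
    (hνsmul : ∀ (c : F) (v : V), c ≠ 0 → ν (c • v) = ν v)
    (t : Module.Basis ℕ F B)
    (Nrm : B ⊗[F] V → ℝ)
    (hNrm : ∀ x : B ⊗[F] V,
      Nrm x = sInf { r : ℝ | ∃ (n : ℕ) (b : Fin n → B) (w : Fin n → V),
        x = ∑ i, b i ⊗ₜ[F] w i ∧ r = ⨆ i, ν (w i) })
    (v : ℕ →₀ V) :
    Nrm (v.sum fun n vn => t n ⊗ₜ[F] vn) = ⨆ n, ν (v n) := by
  have hνsmul_le (c : F) (w : V) : ν (c • w) ≤ ν w := by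
    rcases eq_or_ne c 0 with rfl | hc
    · simpa [hν0] using hνnonneg w
    · exact (hνsmul c w hc).le
  rw [hNrm]
  exact (isLeast_representationBounds t hν0 hνnonneg hνna hνsmul_le v).csInf_eq
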